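/- Let C be a d-circuit. For every tuple-weighting ω : R(C) → ℝ₊, the edge-weighting W induced by ω (W(e) := Σ_{τ ∈ R(e)} ω(τ)) is sound: for every non-output ∪-gate u, Σ_{i ∈ in(u)} W(i) = Σ_{o ∈ out(u)} W(o); and for every ×-gate u, all ingoing edges get equal weight and, when u is not the output, this common weight equals Σ_{o ∈ out(u)} W(o). -/

import Mathlib

open Finset

/-- Labels of gates in a `{∪,×}`-circuit: inputs `x/d`, union gates, product gates. -/
inductive GLabel (X D : Type) where
  | inp (x : X) (d : D)
  | union
  | prod

/-- Restriction of a (partial) tuple to a set of attributes. -/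
def restrictTup {X D : Type} [DecidableEq X] (τ : X → Option D) (A : Finset X) :
    X → Option D :=
  fun x => if x ∈ A then τ x else none

/-- A `{∪,×}`-circuit on attributes `X` and domain `D`: a finite DAG whose leaves are
labeled by singleton relations `x/d`, internal gates by `∪` or `×` (with the syntactic
restrictions on attribute sets), together with its semantics `rel`. -/
structure Circuit (X D : Type) [Fintype X] [Fintype D] [DecidableEq X] [DecidableEq D] where
  Gate : Type
  fg : Fintype Gate
  dg : DecidableEq Gate
  children : Gate → Finset Gate
  label : Gate → GLabel X D
  output : Gate
  attrs : Gate → Finset X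
  rel : Gate → Finset (X → Option D)
  depth : Gate → ℕ
  depth_lt : ∀ u, ∀ c ∈ children u, depth c < depth u
  inp_no_children : ∀ u x d, label u = .inp x d → children u = ∅
  internal_children_nonempty :
    ∀ u, (label u = .union ∨ label u = .prod) → (children u).Nonempty
  attrs_inp : ∀ u x d, label u = .inp x d → attrs u = {x}
  attrs_internal :
    ∀ u, (label u = .union ∨ label u = .prod) → attrs u = (children u).biUnion attrs
  union_attrs : ∀ u, label u = .union → ∀ c ∈ children u, attrs c = attrs u
  prod_attrs : ∀ u, label u = .prod →
    ∀ c₁ ∈ children u, ∀ c₂ ∈ children u, c₁ ≠ c₂ → Disjoint (attrs c₁) (attrs c₂)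
  rel_support : ∀ u, ∀ τ ∈ rel u, ∀ x, (τ x).isSome ↔ x ∈ attrs u
  rel_inp : ∀ u x d, label u = .inp x d →
    ∀ τ, τ ∈ rel u ↔ τ = (fun y => if y = x then some d else none)
  rel_union : ∀ u, label u = .union → ∀ τ, τ ∈ rel u ↔ ∃ c ∈ children u, τ ∈ rel c
  rel_prod : ∀ u, label u = .prod →
    ∀ τ, τ ∈ rel u ↔ ((∀ x, (τ x).isSome ↔ x ∈ attrs u) ∧
      ∀ c ∈ children u, restrictTup τ (attrs c) ∈ rel c)

attribute [instance] Circuit.fg Circuit.dg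

namespace Circuit

variable {X D : Type} [Fintype X] [Fintype D] [DecidableEq X] [DecidableEq D]

/-- A d-circuit: every `∪`-gate is disjoint (its children define pairwise
disjoint relations). -/
def DisjointUnions (C : Circuit X D) : Prop :=
  ∀ u, C.label u = .union → ∀ c₁ ∈ C.children u, ∀ c₂ ∈ C.children u,
    c₁ ≠ c₂ → Disjoint (C.rel c₁) (C.rel c₂)

/-- The gates of the proof-tree of a tuple `τ`: the output gate is in, and a child `u`
of an included gate `v` is included iff the restriction of `τ` to the attributes of
the subcircuit rooted at `u` belongs to the relation of `u`. -/
inductive InPT (C : Circuit X D) (τ : X → Option D) : C.Gate → Prop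
  | out : InPT C τ C.output
  | step {u v : C.Gate} : InPT C τ v → u ∈ C.children v →
      restrictTup τ (C.attrs u) ∈ C.rel u → InPT C τ u

/-- An edge `e = (u, v)` (from child `u` to parent `v`) belongs to the proof-tree
of `τ`. -/
def EdgeInPT (C : Circuit X D) (τ : X → Option D) (e : C.Gate × C.Gate) : Prop :=
  C.InPT τ e.2 ∧ e.1 ∈ C.children e.2 ∧ restrictTup τ (C.attrs e.1) ∈ C.rel e.1

/-- The edges of the circuit, directed from child to parent. -/
def edges (C : Circuit X D) : Finset (C.Gate × C.Gate) :=
  Finset.univ.filter (fun e => e.1 ∈ C.children e.2)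

/-- Outgoing edges of a gate `u` (towards its parents). -/
def outEdges (C : Circuit X D) (u : C.Gate) : Finset (C.Gate × C.Gate) :=
  C.edges.filter (fun e => e.1 = u)

/-- Ingoing edges of a gate `u` (from its children). -/
def inEdges (C : Circuit X D) (u : C.Gate) : Finset (C.Gate × C.Gate) :=
  C.edges.filter (fun e => e.2 = u)

open Classical in
/-- `R(e)`: the set of tuples of `R(C)` whose proof-tree contains the edge `e`. -/
noncomputable def relEdge (C : Circuit X D) (e : C.Gate × C.Gate) :
    Finset (X → Option D) :=
  (C.rel C.output).filter (fun τ => C.EdgeInPT τ e)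

/-- Soundness of an edge-weighting: flow conservation at non-output `∪`-gates, and at
`×`-gates all ingoing edges carry the same weight, which (for non-output gates)
equals the sum of the outgoing weights. -/
def Sound (C : Circuit X D) (W : C.Gate × C.Gate → ℝ) : Prop :=
  (∀ u, C.label u = .union → u ≠ C.output →
      ∑ i ∈ C.inEdges u, W i = ∑ o ∈ C.outEdges u, W o) ∧
  (∀ u, C.label u = .prod →
      (∀ i ∈ C.inEdges u, ∀ i' ∈ C.inEdges u, W i = W i') ∧
      (u ≠ C.output → ∀ i ∈ C.inEdges u, W i = ∑ o ∈ C.outEdges u, W o))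

end Circuit

/-!
In a d-circuit every proof-tree is a genuine tree: a gate of the proof-tree of `τ` has at
most one proof-tree child carrying a given attribute (at a `∪`-gate by disjointness of the
children's relations, at a `×`-gate by disjointness of their attributes). Hence any two
proof-tree gates sharing an attribute are comparable, so a non-output gate has exactly one
proof-tree parent, and a `∪`-gate of the proof-tree exactly one proof-tree child, while all
children of a `×`-gate of the proof-tree belong to it. Summing `ω` over the tuples, every side
of the soundness equations is then the total weight of the tuples whose proof-tree contains `u`.
-/

open Relation

lemma restrictTup_restrictTup {X D : Type} [DecidableEq X] {A B : Finset X} (h : A ⊆ B)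
    (τ : X → Option D) :
    restrictTup (restrictTup τ B) A = restrictTup τ A := by
  funext x
  by_cases hx : x ∈ A
  · simp [restrictTup, hx, h hx]
  · simp [restrictTup, hx]

lemma restrictTup_eq_self {X D : Type} [DecidableEq X] {τ : X → Option D} {A : Finset X}
    (h : ∀ x, (τ x).isSome ↔ x ∈ A) : restrictTup τ A = τ := by
  funext x
  by_cases hx : x ∈ A
  · simp [restrictTup, hx]
  · simp only [restrictTup, hx, if_false]
    exact (Option.not_isSome_iff_eq_none.mp ((h x).not.mpr hx)).symm

namespace Circuit

variable {X D : Type} [Fintype X] [Fintype D] [DecidableEq X] [DecidableEq D]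
  {C : Circuit X D} {τ : X → Option D}

lemma label_internal_of_mem_children {u c : C.Gate} (hc : c ∈ C.children u) :
    C.label u = .union ∨ C.label u = .prod := by
  cases hl : C.label u with
  | inp x d => simp [C.inp_no_children u x d hl] at hc
  | union => exact .inl rfl
  | prod => exact .inr rfl

lemma attrs_subset_of_mem_children {u c : C.Gate} (hc : c ∈ C.children u) :
    C.attrs c ⊆ C.attrs u := by
  rw [C.attrs_internal u (label_internal_of_mem_children hc)]
  exact subset_biUnion_of_mem _ hc

lemma attrs_nonempty (u : C.Gate) : (C.attrs u).Nonempty := by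
  cases hl : C.label u with
  | inp x d => exact ⟨x, by simp [C.attrs_inp u x d hl]⟩
  | union | prod =>
    obtain ⟨c, hc⟩ := C.internal_children_nonempty u (by simp [hl])
    have := C.depth_lt u c hc
    exact (attrs_nonempty c).mono (attrs_subset_of_mem_children hc)
termination_by C.depth u

/-- `u` is a child of `w` that belongs to the proof-tree of `τ` as soon as `w` does. -/
def IsPTChild (C : Circuit X D) (τ : X → Option D) (w u : C.Gate) : Prop :=
  u ∈ C.children w ∧ restrictTup τ (C.attrs u) ∈ C.rel u

lemma InPT.reflTransGen {u : C.Gate} (h : C.InPT τ u) :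
    ReflTransGen (C.IsPTChild τ) C.output u := by
  induction h with
  | out => exact .refl
  | step _ hc hr ih => exact ih.tail ⟨hc, hr⟩

lemma InPT.restrictTup_mem (hτ : τ ∈ C.rel C.output) {u : C.Gate} (h : C.InPT τ u) :
    restrictTup τ (C.attrs u) ∈ C.rel u := by
  cases h with
  | out => rwa [restrictTup_eq_self (C.rel_support _ τ hτ)]
  | step _ _ hr => exact hr

lemma depth_le_of_reflTransGen {w u : C.Gate} (h : ReflTransGen (C.IsPTChild τ) w u) :
    C.depth u ≤ C.depth w := by
  induction h with
  | refl => exact le_rfl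
  | tail _ hc ih => exact (C.depth_lt _ _ hc.1).le.trans ih

lemma IsPTChild.eq_of_mem_attrs (hd : C.DisjointUnions) {w c₁ c₂ : C.Gate} {x : X}
    (h₁ : C.IsPTChild τ w c₁) (h₂ : C.IsPTChild τ w c₂)
    (hx₁ : x ∈ C.attrs c₁) (hx₂ : x ∈ C.attrs c₂) : c₁ = c₂ := by
  by_contra hne
  rcases label_internal_of_mem_children h₁.1 with hl | hl
  · -- both children carry the attributes of `w`, so `τ` restricts to the same tuple
    have hr₁ := h₁.2
    have hr₂ := h₂.2
    rw [C.union_attrs w hl c₁ h₁.1] at hr₁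
    rw [C.union_attrs w hl c₂ h₂.1] at hr₂
    exact disjoint_left.mp (hd w hl c₁ h₁.1 c₂ h₂.1 hne) hr₁ hr₂
  · exact disjoint_left.mp (C.prod_attrs w hl c₁ h₁.1 c₂ h₂.1 hne) hx₁ hx₂

lemma eq_or_reflTransGen_of_isPTChild (hd : C.DisjointUnions) {w v c : C.Gate} {x : X}
    (hv : ReflTransGen (C.IsPTChild τ) w v) (hc : C.IsPTChild τ w c)
    (hxv : x ∈ C.attrs v) (hxc : x ∈ C.attrs c) :
    v = w ∨ ReflTransGen (C.IsPTChild τ) c v := by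
  induction hv with
  | refl => exact .inl rfl
  | tail _ huv ih =>
    rcases ih (attrs_subset_of_mem_children huv.1 hxv) with rfl | h
    · exact .inr (hc.eq_of_mem_attrs hd huv hxc hxv ▸ .refl)
    · exact .inr (h.tail huv)

lemma reflTransGen_total_of_mem_attrs (hd : C.DisjointUnions) {w v₁ v₂ : C.Gate} {x : X}
    (h₁ : ReflTransGen (C.IsPTChild τ) w v₁) (h₂ : ReflTransGen (C.IsPTChild τ) w v₂)
    (hx₁ : x ∈ C.attrs v₁) (hx₂ : x ∈ C.attrs v₂) :
    ReflTransGen (C.IsPTChild τ) v₁ v₂ ∨ ReflTransGen (C.IsPTChild τ) v₂ v₁ := by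
  induction h₂ with
  | refl => exact .inr h₁
  | tail _ hvu ih =>
    rcases ih (attrs_subset_of_mem_children hvu.1 hx₂) with h | h
    · exact .inl (h.tail hvu)
    · rcases eq_or_reflTransGen_of_isPTChild hd h hvu hx₁ hx₂ with rfl | h'
      · exact .inl (.single hvu)
      · exact .inr h'

lemma eq_of_reflTransGen_of_isPTChild (hd : C.DisjointUnions) {v₁ v₂ u : C.Gate}
    (h : ReflTransGen (C.IsPTChild τ) v₁ v₂) (h₁ : C.IsPTChild τ v₁ u)
    (h₂ : C.IsPTChild τ v₂ u) : v₁ = v₂ := by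
  obtain ⟨x, hx⟩ := attrs_nonempty u
  rcases eq_or_reflTransGen_of_isPTChild hd h h₁ (attrs_subset_of_mem_children h₂.1 hx) hx
    with h' | h'
  · exact h'.symm
  · exact absurd (depth_le_of_reflTransGen h') (C.depth_lt _ _ h₂.1).not_ge

lemma InPT.eq_of_isPTChild (hd : C.DisjointUnions) {v₁ v₂ u : C.Gate}
    (h₁ : C.InPT τ v₁) (h₂ : C.InPT τ v₂)
    (hc₁ : C.IsPTChild τ v₁ u) (hc₂ : C.IsPTChild τ v₂ u) : v₁ = v₂ := by
  obtain ⟨x, hx⟩ := attrs_nonempty u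
  rcases reflTransGen_total_of_mem_attrs hd h₁.reflTransGen h₂.reflTransGen
    (attrs_subset_of_mem_children hc₁.1 hx) (attrs_subset_of_mem_children hc₂.1 hx) with h | h
  · exact eq_of_reflTransGen_of_isPTChild hd h hc₁ hc₂
  · exact (eq_of_reflTransGen_of_isPTChild hd h hc₂ hc₁).symm

@[simp]
lemma mem_inEdges {e : C.Gate × C.Gate} {u : C.Gate} :
    e ∈ C.inEdges u ↔ e.1 ∈ C.children u ∧ e.2 = u := by
  rcases e with ⟨c, v⟩
  simp only [inEdges, edges, mem_filter, mem_univ, true_and]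
  exact ⟨fun ⟨hc, hv⟩ => ⟨hv ▸ hc, hv⟩, fun ⟨hc, hv⟩ => ⟨hv ▸ hc, hv⟩⟩

@[simp]
lemma mem_outEdges {e : C.Gate × C.Gate} {u : C.Gate} :
    e ∈ C.outEdges u ↔ e.1 = u ∧ u ∈ C.children e.2 := by
  rcases e with ⟨c, v⟩
  simp only [outEdges, edges, mem_filter, mem_univ, true_and]
  exact ⟨fun ⟨hc, hu⟩ => ⟨hu, hu ▸ hc⟩, fun ⟨hu, hc⟩ => ⟨hu ▸ hc, hu⟩⟩

open Classical in
lemma card_filter_edgeInPT_inEdges_of_union (hd : C.DisjointUnions)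
    (hτ : τ ∈ C.rel C.output) {u : C.Gate} (hl : C.label u = .union) :
    #((C.inEdges u).filter (C.EdgeInPT τ)) = if C.InPT τ u then 1 else 0 := by
  split_ifs with hu
  · refine le_antisymm (card_le_one.mpr ?_) (card_pos.mpr ?_)
    · rintro ⟨c₁, _⟩ h₁ ⟨c₂, _⟩ h₂
      simp only [mem_filter, mem_inEdges] at h₁ h₂
      obtain ⟨⟨hc₁, rfl⟩, -, h₁⟩ := h₁
      obtain ⟨⟨hc₂, rfl⟩, -, h₂⟩ := h₂
      obtain ⟨x, hx⟩ := attrs_nonempty c₁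
      have hx' : x ∈ C.attrs c₂ := by
        rwa [C.union_attrs _ hl c₂ hc₂, ← C.union_attrs _ hl c₁ hc₁]
      exact Prod.ext (IsPTChild.eq_of_mem_attrs hd h₁ h₂ hx hx') rfl
    · obtain ⟨c, hc, hr⟩ := (C.rel_union u hl _).mp (hu.restrictTup_mem hτ)
      refine ⟨(c, u), mem_filter.mpr ⟨mem_inEdges.mpr ⟨hc, rfl⟩, hu, hc, ?_⟩⟩
      rwa [C.union_attrs u hl c hc]
  · refine card_eq_zero.mpr (filter_eq_empty_iff.mpr fun e he hpt => hu ?_)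
    exact (mem_inEdges.mp he).2 ▸ hpt.1

open Classical in
lemma card_filter_edgeInPT_outEdges (hd : C.DisjointUnions) {u : C.Gate}
    (hu : u ≠ C.output) :
    #((C.outEdges u).filter (C.EdgeInPT τ)) = if C.InPT τ u then 1 else 0 := by
  split_ifs with hτu
  · refine le_antisymm (card_le_one.mpr ?_) (card_pos.mpr ?_)
    · rintro ⟨_, v₁⟩ h₁ ⟨_, v₂⟩ h₂
      simp only [mem_filter, mem_outEdges] at h₁ h₂
      obtain ⟨⟨rfl, -⟩, hv₁, h₁⟩ := h₁
      obtain ⟨⟨rfl, -⟩, hv₂, h₂⟩ := h₂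
      exact Prod.ext rfl (hv₁.eq_of_isPTChild hd hv₂ h₁ h₂)
    · cases hτu with
      | out => exact absurd rfl hu
      | step hv hc hr =>
        exact ⟨(_, _), mem_filter.mpr ⟨mem_outEdges.mpr ⟨rfl, hc⟩, hv, hc, hr⟩⟩
  · refine card_eq_zero.mpr (filter_eq_empty_iff.mpr fun e he hpt => hτu ?_)
    exact (mem_outEdges.mp he).1 ▸ hpt.1.step hpt.2.1 hpt.2.2

lemma edgeInPT_iff_of_prod (hτ : τ ∈ C.rel C.output) {u c : C.Gate}
    (hl : C.label u = .prod) (hc : c ∈ C.children u) :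
    C.EdgeInPT τ (c, u) ↔ C.InPT τ u := by
  refine ⟨And.left, fun hu => ⟨hu, hc, ?_⟩⟩
  have h := ((C.rel_prod u hl _).mp (hu.restrictTup_mem hτ)).2 c hc
  rwa [restrictTup_restrictTup (attrs_subset_of_mem_children hc)] at h

noncomputable def inducedWeight (C : Circuit X D) (ω : (X → Option D) → ℝ)
    (e : C.Gate × C.Gate) : ℝ :=
  ∑ τ ∈ C.relEdge e, ω τ

open Classical in
noncomputable def gateWeight (C : Circuit X D) (ω : (X → Option D) → ℝ) (u : C.Gate) : ℝ :=
  ∑ τ ∈ (C.rel C.output).filter (C.InPT · u), ω τ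

variable (ω : (X → Option D) → ℝ)

open Classical in
lemma sum_inducedWeight_eq_gateWeight {E : Finset (C.Gate × C.Gate)} {u : C.Gate}
    (hE : ∀ τ ∈ C.rel C.output, #(E.filter (C.EdgeInPT τ)) = if C.InPT τ u then 1 else 0) :
    ∑ e ∈ E, C.inducedWeight ω e = C.gateWeight ω u := by
  simp only [inducedWeight, relEdge, gateWeight, sum_filter]
  rw [sum_comm]
  refine sum_congr rfl fun τ hτ => ?_
  rw [← sum_filter, sum_const, hE τ hτ]
  split_ifs <;> simp

lemma sum_inducedWeight_inEdges_of_union (hd : C.DisjointUnions) {u : C.Gate}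
    (hl : C.label u = .union) :
    ∑ e ∈ C.inEdges u, C.inducedWeight ω e = C.gateWeight ω u :=
  sum_inducedWeight_eq_gateWeight ω fun _ hτ => card_filter_edgeInPT_inEdges_of_union hd hτ hl

lemma sum_inducedWeight_outEdges (hd : C.DisjointUnions) {u : C.Gate} (hu : u ≠ C.output) :
    ∑ e ∈ C.outEdges u, C.inducedWeight ω e = C.gateWeight ω u :=
  sum_inducedWeight_eq_gateWeight ω fun _ _ => card_filter_edgeInPT_outEdges hd hu

open Classical in
lemma inducedWeight_inEdges_of_prod {u : C.Gate} (hl : C.label u = .prod)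
    {e : C.Gate × C.Gate} (he : e ∈ C.inEdges u) : C.inducedWeight ω e = C.gateWeight ω u := by
  obtain ⟨c, _⟩ := e
  obtain ⟨hc, rfl⟩ := mem_inEdges.mp he
  unfold inducedWeight relEdge gateWeight
  congr 1
  exact filter_congr fun τ hτ => edgeInPT_iff_of_prod hτ hl hc

end Circuit

theorem induced_weighting_sound_general {X D : Type} [Fintype X] [Fintype D]
    [DecidableEq X] [DecidableEq D]
    (C : Circuit X D) (hd : C.DisjointUnions)
    (ω : (X → Option D) → ℝ) :
    C.Sound (fun e => ∑ τ ∈ C.relEdge e, ω τ) := by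
  change C.Sound (C.inducedWeight ω)
  refine ⟨fun u hl hu => ?_, fun u hl => ⟨fun i hi i' hi' => ?_, fun hu i hi => ?_⟩⟩
  · rw [C.sum_inducedWeight_inEdges_of_union ω hd hl, C.sum_inducedWeight_outEdges ω hd hu]
  · rw [C.inducedWeight_inEdges_of_prod ω hl hi, C.inducedWeight_inEdges_of_prod ω hl hi']
  · rw [C.inducedWeight_inEdges_of_prod ω hl hi, C.sum_inducedWeight_outEdges ω hd hu]

/-- The edge-weighting induced by any tuple-weighting of a d-circuit is sound. -/
theorem induced_weighting_sound {X D : Type} [Fintype X] [Fintype D]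
    [DecidableEq X] [DecidableEq D]
    (C : Circuit X D) (hd : C.DisjointUnions)
    (ω : (X → Option D) → ℝ) (hω : ∀ τ ∈ C.rel C.output, 0 ≤ ω τ) :
    C.Sound (fun e => ∑ τ ∈ C.relEdge e, ω τ) :=
  induced_weighting_sound_general C hd ω
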